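/- Let ℓ²(ℤ) carry the real structure ē_n = e_{−n}, and for α ∈ ℝ let Q_α be the closed densely defined operator Q_α e_n = e^{αn} e_n with domain {(a_n) : Σ (1+e^{2αn})|a_n|² < ∞}. Then Q_α satisfies Q_α* = conj(Q_α)^{-1}, and hence L_α := graph(Q_α) is a Lagrangian in ℓ²(ℤ) ⊕ (−ℓ²(ℤ)). Moreover, for α₁ = −α₂ ≠ 0, the composition L_{α₁} ∘ L_{α₂} is not closed, hence not a Lagrangian. -/

import Mathlib

noncomputable section

/-- A real structure on a complex inner product space: an anti-unitary involution `v ↦ v̄`. -/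
structure RealStructure (W : Type*) [NormedAddCommGroup W] [InnerProductSpace ℂ W] where
  conj : W → W
  map_add : ∀ v w : W, conj (v + w) = conj v + conj w
  map_smul : ∀ (c : ℂ) (v : W), conj (c • v) = (starRingEnd ℂ) c • conj v
  invol : ∀ v : W, conj (conj v) = v
  inner_conj : ∀ v w : W, (inner ℂ (conj v) (conj w) : ℂ) = (starRingEnd ℂ) (inner ℂ v w : ℂ)

/-- The real structure of `A ⊕ (−B)`. -/
def pairConj {A B : Type*} [NormedAddCommGroup A] [InnerProductSpace ℂ A]
    [NormedAddCommGroup B] [InnerProductSpace ℂ B]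
    (rA : RealStructure A) (rB : RealStructure B) : A × B → A × B :=
  fun p => (rA.conj p.1, -rB.conj p.2)

/-- The Hermitian inner product of `A ⊕ B`. -/
def pairInner {A B : Type*} [NormedAddCommGroup A] [InnerProductSpace ℂ A]
    [NormedAddCommGroup B] [InnerProductSpace ℂ B] (x y : A × B) : ℂ :=
  (inner ℂ x.1 y.1 : ℂ) + (inner ℂ x.2 y.2 : ℂ)

/-- A Lagrangian `L ⊆ A ⊕ (−B)`. -/
def IsLagrangianPair {A B : Type*} [NormedAddCommGroup A] [InnerProductSpace ℂ A]
    [NormedAddCommGroup B] [InnerProductSpace ℂ B]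
    (rA : RealStructure A) (rB : RealStructure B) (L : Submodule ℂ (A × B)) : Prop :=
  pairConj rA rB '' (L : Set (A × B)) = {y : A × B | ∀ x ∈ L, pairInner x y = 0}

/-- The composition of two linear relations `L₀₁ ⊆ W₀ × W₁`, `L₁₂ ⊆ W₁ × W₂`. -/
def composeRel {W₀ W₁ W₂ : Type*} [NormedAddCommGroup W₀] [InnerProductSpace ℂ W₀]
    [NormedAddCommGroup W₁] [InnerProductSpace ℂ W₁]
    [NormedAddCommGroup W₂] [InnerProductSpace ℂ W₂]
    (L01 : Submodule ℂ (W₀ × W₁)) (L12 : Submodule ℂ (W₁ × W₂)) :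
    Submodule ℂ (W₀ × W₂) where
  carrier := {p | ∃ w₁ : W₁, (p.1, w₁) ∈ L01 ∧ (w₁, p.2) ∈ L12}
  add_mem' := by
    rintro a b ⟨w, hw1, hw2⟩ ⟨w', hw1', hw2'⟩
    exact ⟨w + w', L01.add_mem hw1 hw1', L12.add_mem hw2 hw2'⟩
  zero_mem' := ⟨0, L01.zero_mem, L12.zero_mem⟩
  smul_mem' := by
    rintro c a ⟨w, hw1, hw2⟩
    exact ⟨c • w, L01.smul_mem c hw1, L12.smul_mem c hw2⟩

variable {H : Type*} [NormedAddCommGroup H] [InnerProductSpace ℂ H] [CompleteSpace H]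

/-- The graph of the (unbounded, densely defined, closed) operator `Q_α e_n = e^{αn} e_n`
on `ℓ²(ℤ)`, described by an orthonormal Hilbert basis `(e_n)_{n ∈ ℤ}`:
`(a, b) ∈ graph(Q_α)` iff `b` has coefficients `⟨e_n, b⟩ = e^{αn} ⟨e_n, a⟩`. -/
def graphQ (e : HilbertBasis ℤ ℂ H) (α : ℝ) : Submodule ℂ (H × H) where
  carrier := {p | ∀ n : ℤ, (inner ℂ (e n) p.2 : ℂ) = (Real.exp (α * n) : ℝ) * inner ℂ (e n) p.1}
  add_mem' := by
    intro a b ha hb n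
    simp only [Prod.fst_add, Prod.snd_add, inner_add_right, ha n, hb n]
    ring
  zero_mem' := by
    intro n
    simp
  smul_mem' := by
    intro c a ha n
    simp only [Prod.smul_fst, Prod.smul_snd, inner_smul_right, ha n]
    ring

/-!
`Q_α` is diagonal in the basis `(e_n)` with the real multipliers `e^{αn}`, so testing against the
basis vectors and using Parseval identifies the adjoint: `(a, b) ∈ graph(Q_α*)` iff
`b = Q_α a`, i.e. iff `(b, a) ∈ graph(Q_α⁻¹) = graph(Q_{−α})`. The real structure `ē_n = e_{−n}`
turns `Q_α` into `Q_{−α}`, so both `conj(L_α)` and the orthogonal complement of `L_α` in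
`ℓ²(ℤ) ⊕ (−ℓ²(ℤ))` are `{y | (−y₁, y₂) ∈ L_{−α}}`.

Since `Q_{−α} = Q_α⁻¹`, the composition `L_α ∘ L_{−α}` is the diagonal over the domain of `Q_α`.
That domain contains every `e_n`, hence is dense, but for `α ≠ 0` it misses the vector with
coefficients `e^{−|αn|}`, whose image would have coefficients of modulus `1` for all `n` with
`αn ≥ 0`. The diagonal preimage of a closed relation is closed, so the composition is not closed;
a Lagrangian is closed, being the conjugate of an orthogonal complement.
-/

namespace RealStructure

variable {W : Type*} [NormedAddCommGroup W] [InnerProductSpace ℂ W] (r : RealStructure W)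

theorem conj_neg (v : W) : r.conj (-v) = -r.conj v := by
  simpa using r.map_smul (-1) v

theorem norm_conj (v : W) : ‖r.conj v‖ = ‖v‖ := by
  rw [@norm_eq_sqrt_re_inner ℂ, @norm_eq_sqrt_re_inner ℂ, r.inner_conj, RCLike.conj_re]

theorem continuous_conj : Continuous r.conj :=
  (AddMonoidHomClass.isometry_of_norm (AddMonoidHom.mk' r.conj r.map_add) r.norm_conj).continuous

end RealStructure

section LagrangianPair

variable {A B : Type*} [NormedAddCommGroup A] [InnerProductSpace ℂ A]
  [NormedAddCommGroup B] [InnerProductSpace ℂ B] (rA : RealStructure A) (rB : RealStructure B)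

theorem pairConj_involutive : Function.Involutive (pairConj rA rB) := fun p => by
  simp only [pairConj, rA.invol, rB.conj_neg, rB.invol, neg_neg]

theorem continuous_pairConj : Continuous (pairConj rA rB) :=
  (rA.continuous_conj.comp continuous_fst).prodMk (rB.continuous_conj.comp continuous_snd).neg

theorem isClosed_setOf_pairInner_eq_zero (L : Submodule ℂ (A × B)) :
    IsClosed {y : A × B | ∀ x ∈ L, pairInner x y = 0} := by
  simp only [Set.ofPred_forall]
  exact isClosed_biInter fun x _ => isClosed_eq
    ((continuous_const.inner continuous_fst).add (continuous_const.inner continuous_snd))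
    continuous_const

theorem IsLagrangianPair.isClosed {rA rB} {L : Submodule ℂ (A × B)}
    (hL : IsLagrangianPair rA rB L) : IsClosed (L : Set (A × B)) := by
  rw [← Set.preimage_image_eq (L : Set (A × B)) (pairConj_involutive rA rB).injective, hL]
  exact (isClosed_setOf_pairInner_eq_zero L).preimage (continuous_pairConj rA rB)

end LagrangianPair

theorem not_isClosed_of_dense_diag_preimage {X : Type*} [TopologicalSpace X] {C : Set (X × X)}
    (hdense : Dense ((fun x => (x, x)) ⁻¹' C)) (hne : (fun x => (x, x)) ⁻¹' C ≠ Set.univ) :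
    ¬ IsClosed C := fun hC =>
  hne <| (hC.preimage (continuous_id.prodMk continuous_id)).closure_eq.symm.trans hdense.closure_eq

theorem summable_pow_natAbs {r : ℝ} (h0 : 0 ≤ r) (h1 : r < 1) :
    Summable fun n : ℤ => r ^ n.natAbs :=
  .of_nat_of_neg (by simpa using summable_geometric_of_lt_one h0 h1)
    (by simpa using summable_geometric_of_lt_one h0 h1)

theorem memℓp_exp_neg_abs_mul {α : ℝ} (hα : α ≠ 0) :
    Memℓp (fun n : ℤ => ((Real.exp (-|α * n|) : ℝ) : ℂ)) 2 := by
  refine memℓp_gen ((summable_pow_natAbs (Real.exp_nonneg (-(2 * |α|)))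
    (Real.exp_lt_one_iff.mpr (by simpa using hα))).congr fun n => ?_)
  rw [Complex.norm_real, Real.norm_of_nonneg (Real.exp_nonneg _), ENNReal.toReal_ofNat,
    Real.rpow_two, ← Real.exp_nat_mul, ← Real.exp_nat_mul, Nat.cast_natAbs, abs_mul]
  push_cast
  ring_nf

theorem infinite_setOf_nonneg_mul {α : ℝ} (hα : α ≠ 0) : {n : ℤ | 0 ≤ α * n}.Infinite := by
  rcases hα.lt_or_gt with hneg | hpos
  · exact (Set.Iic_infinite 0).mono fun n hn =>
      mul_nonneg_of_nonpos_of_nonpos hneg.le (by exact_mod_cast hn)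
  · exact (Set.Ici_infinite 0).mono fun n hn => mul_nonneg hpos.le (by exact_mod_cast hn)

section GraphQ

omit [CompleteSpace H]

variable (e : HilbertBasis ℤ ℂ H) (α : ℝ)

theorem mem_graphQ_iff_inner_left (p : H × H) :
    p ∈ graphQ e α ↔ ∀ n : ℤ, inner ℂ p.2 (e n) = (Real.exp (α * n) : ℂ) * inner ℂ p.1 (e n) :=
  forall_congr' fun n => by
    rw [← (starRingEnd ℂ).injective.eq_iff, map_mul, Complex.conj_ofReal, inner_conj_symm,
      inner_conj_symm]

theorem mem_graphQ_neg_swap_iff (a b : H) : (b, a) ∈ graphQ e (-α) ↔ (a, b) ∈ graphQ e α :=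
  forall_congr' fun n => by
    rw [neg_mul, Real.exp_neg, Complex.ofReal_inv,
      eq_inv_mul_iff_mul_eq₀ (Complex.ofReal_ne_zero.mpr (Real.exp_pos _).ne'), eq_comm]

theorem basis_mem_graphQ (m : ℤ) : (e m, (Real.exp (α * m) : ℂ) • e m) ∈ graphQ e α := by
  intro n
  rw [inner_smul_right, orthonormal_iff_ite.mp e.orthonormal n m]
  split_ifs with h
  · rw [h]
  · simp

theorem graphQ_adjoint_iff (a b : H) :
    (∀ p ∈ graphQ e α, inner ℂ a p.2 = inner ℂ b p.1) ↔ (b, a) ∈ graphQ e (-α) := by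
  rw [mem_graphQ_neg_swap_iff, mem_graphQ_iff_inner_left]
  constructor
  · intro h n
    simpa [inner_smul_right] using (h _ (basis_mem_graphQ e α n)).symm
  · intro h p hp
    rw [← e.tsum_inner_mul_inner, ← e.tsum_inner_mul_inner]
    refine tsum_congr fun n => ?_
    rw [hp n, h n]
    ring

theorem mem_orthogonal_graphQ_iff (y : H × H) :
    (∀ x ∈ graphQ e α, pairInner x y = 0) ↔ (-y.1, y.2) ∈ graphQ e (-α) := by
  rw [← graphQ_adjoint_iff]
  refine forall₂_congr fun p _ => ?_
  rw [pairInner, inner_neg_left, ← inner_conj_symm y.2, ← inner_conj_symm y.1, ← map_neg,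
    (starRingEnd ℂ).injective.eq_iff, add_eq_zero_iff_eq_neg']

def domainQ : Submodule ℂ H := (graphQ e α).map (LinearMap.fst ℂ H H)

theorem mem_domainQ_iff (a : H) : a ∈ domainQ e α ↔ ∃ b, (a, b) ∈ graphQ e α := by
  simp [domainQ]

theorem dense_domainQ : Dense (domainQ e α : Set H) := by
  have hspan : Submodule.span ℂ (Set.range e) ≤ domainQ e α := Submodule.span_le.mpr <| by
    rintro _ ⟨m, rfl⟩
    exact (mem_domainQ_iff e α _).mpr ⟨_, basis_mem_graphQ e α m⟩
  rw [Submodule.dense_iff_topologicalClosure_eq_top, eq_top_iff, ← e.dense_span]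
  exact Submodule.topologicalClosure_mono hspan

theorem domainQ_ne_top (hα : α ≠ 0) : domainQ e α ≠ ⊤ := by
  set a : H := e.repr.symm ⟨_, memℓp_exp_neg_abs_mul hα⟩
  have ha (n : ℤ) : inner ℂ (e n) a = (Real.exp (-|α * n|) : ℂ) := by
    rw [← e.repr_apply_apply, LinearIsometryEquiv.apply_symm_apply]
  intro htop
  obtain ⟨b, hab⟩ := (mem_domainQ_iff e α a).mp (htop ▸ Submodule.mem_top)
  have hone (n : ℤ) (hn : 0 ≤ α * n) : ‖inner ℂ (e n) b‖ ^ 2 = 1 := by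
    rw [hab n, ha, ← Complex.ofReal_mul, ← Real.exp_add, abs_of_nonneg hn, add_neg_cancel,
      Real.exp_zero, Complex.ofReal_one, norm_one, one_pow]
  have hsmall := (e.orthonormal.inner_products_summable b).tendsto_cofinite_zero.eventually
    (gt_mem_nhds one_pos)
  refine infinite_setOf_nonneg_mul hα (Filter.eventually_cofinite.mp hsmall |>.subset ?_)
  exact fun n hn => not_lt.mpr (hone n hn).ge

theorem preimage_diag_composeRel_graphQ :
    (fun a => (a, a)) ⁻¹' (composeRel (graphQ e α) (graphQ e (-α)) : Set (H × H)) =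
      domainQ e α := by
  ext a
  simp [composeRel, mem_graphQ_neg_swap_iff, mem_domainQ_iff]

theorem not_isClosed_composeRel_graphQ (hα : α ≠ 0) :
    ¬ IsClosed (composeRel (graphQ e α) (graphQ e (-α)) : Set (H × H)) := by
  refine not_isClosed_of_dense_diag_preimage ?_ ?_ <;> rw [preimage_diag_composeRel_graphQ]
  · exact dense_domainQ e α
  · exact mt Submodule.coe_eq_univ.mp (domainQ_ne_top e α hα)

variable {e} (r : RealStructure H) (hr : ∀ n : ℤ, r.conj (e n) = e (-n))
include hr

theorem inner_basis_conj (n : ℤ) (v : H) :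
    inner ℂ (e n) (r.conj v) = starRingEnd ℂ (inner ℂ (e (-n)) v) := by
  rw [← r.inner_conj, hr, neg_neg]

theorem conj_mem_graphQ_iff (a b : H) :
    (r.conj a, r.conj b) ∈ graphQ e α ↔ (a, b) ∈ graphQ e (-α) := by
  refine ((Equiv.neg ℤ).forall_congr_right).symm.trans (forall_congr' fun n => ?_)
  simp only [Equiv.neg_apply, inner_basis_conj r hr, neg_neg]
  rw [← Complex.conj_ofReal, ← map_mul, (starRingEnd ℂ).injective.eq_iff, Int.cast_neg, mul_neg,
    neg_mul]

theorem mem_pairConj_image_graphQ_iff (y : H × H) :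
    y ∈ pairConj r r '' (graphQ e α : Set (H × H)) ↔ (-y.1, y.2) ∈ graphQ e (-α) := by
  rw [(pairConj_involutive r r).image_eq_preimage_symm, Set.mem_preimage, SetLike.mem_coe,
    pairConj, ← r.conj_neg, conj_mem_graphQ_iff α r hr, ← neg_mem_iff, Prod.neg_mk, neg_neg]

theorem isLagrangianPair_graphQ : IsLagrangianPair r r (graphQ e α) :=
  Set.ext fun y =>
    (mem_pairConj_image_graphQ_iff α r hr y).trans (mem_orthogonal_graphQ_iff e α y).symm

end GraphQ

/-- On `ℓ²(ℤ)` with the real structure `ē_n = e_{−n}`, the operator `Q_α` satisfies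
`Q_α* = conj(Q_α)⁻¹` (stated via graphs: the graph of the adjoint of `Q_α` is the inverse
of the graph of `conj(Q_α)`, which is the graph of `Q_{−α}`), hence its graph `L_α` is a
Lagrangian in `ℓ²(ℤ) ⊕ (−ℓ²(ℤ))`; but for `α ≠ 0` the composition `L_α ∘ L_{−α}` is not
closed, hence not a Lagrangian. -/
theorem graphQ_lagrangian_composition_not_closed
    (e : HilbertBasis ℤ ℂ H) (r : RealStructure H)
    (hr : ∀ n : ℤ, r.conj (e n) = e (-n)) (α : ℝ) :
    -- Q_α* = conj(Q_α)⁻¹:  (a,b) ∈ graph(Q_α*) ↔ (b,a) ∈ graph(conj Q_α) = graph(Q_{−α})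
    (∀ a b : H,
      (∀ p ∈ graphQ e α, (inner ℂ a p.2 : ℂ) = inner ℂ b p.1) ↔ (b, a) ∈ graphQ e (-α)) ∧
    -- hence L_α = graph(Q_α) is a Lagrangian:
    IsLagrangianPair r r (graphQ e α) ∧
    -- but for α ≠ 0 the composition L_α ∘ L_{−α} is not closed, hence not a Lagrangian:
    (α ≠ 0 →
      ¬ IsClosed ((composeRel (graphQ e α) (graphQ e (-α)) : Set (H × H))) ∧
      ¬ IsLagrangianPair r r (composeRel (graphQ e α) (graphQ e (-α)))) := by
  have hnc := not_isClosed_composeRel_graphQ e α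
  exact ⟨graphQ_adjoint_iff e α, isLagrangianPair_graphQ α r hr,
    fun hα => ⟨hnc hα, fun hL => hnc hα hL.isClosed⟩⟩
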